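/- arXiv:0708.1539 — 3 statements merged into one kernel-verified Lean document; each statement's English description precedes it below -/
import Mathlib

section
/- For unit vectors φ, ψ in a complex Hilbert space H, the operator norm of the difference of the rank-one projections satisfies ‖P_φ − P_ψ‖ = √(1 − |⟨φ,ψ⟩|²). -/
/-!
Write `P`, `Q` for the projections onto `φ`, `ψ` and `t = |⟪φ, ψ⟫|²`. Since `PQP = tP` and
`QPQ = tQ`, the self-adjoint operator `T = P - Q` satisfies `T³ = (1 - t) T`. The C⋆-identity
`‖T⁴‖ = ‖T‖⁴` then forces `‖T‖² = 1 - t` unless `T = 0`, in which case `1 - t = ⟪φ, T φ⟫ = 0`.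
-/

open MeasureTheory Topology Filter

/-- The rank-one operator `|φ⟩⟨φ|`. -/
noncomputable def rankOne {H : Type*} [NormedAddCommGroup H] [InnerProductSpace ℂ H]
    (φ : H) : H →L[ℂ] H := (innerSL ℂ φ).smulRight φ

/-- The set of rank-one orthogonal projections (pure states / projective Hilbert space). -/
noncomputable def projSet (H : Type*) [NormedAddCommGroup H] [InnerProductSpace ℂ H] :
    Set (H →L[ℂ] H) := {T | ∃ φ : H, ‖φ‖ = 1 ∧ T = rankOne φ}

/-- The trace of an operator computed along a Hilbert basis. -/
noncomputable def traceAlong {H ι : Type*} [NormedAddCommGroup H] [InnerProductSpace ℂ H]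
    (b : HilbertBasis ι ℂ H) (A : H →L[ℂ] H) : ℂ :=
  ∑' i, inner ℂ (b i) (A (b i))

theorem IsIdempotentElem.sub_mul_sub_mul_sub {R A : Type*} [CommRing R] [Ring A] [Module R A]
    {P Q : A} (hP : IsIdempotentElem P) (hQ : IsIdempotentElem Q) {t : R}
    (hPQP : P * Q * P = t • P) (hQPQ : Q * P * Q = t • Q) :
    (P - Q) * (P - Q) * (P - Q) = (1 - t) • (P - Q) := by
  have hexpand : (P - Q) * (P - Q) * (P - Q) = P - P * Q * P + Q * P * Q - Q := by
    simp only [sub_mul, mul_sub, mul_assoc, hP.eq, hQ.eq]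
    simp only [← mul_assoc]
    abel
  rw [hexpand, hPQP, hQPQ]
  module

theorem IsSelfAdjoint.norm_sq_eq_of_mul_mul_self_eq_smul {𝕜 A : Type*} [NormedField 𝕜]
    [NonUnitalNormedRing A] [StarRing A] [CStarRing A] [NormedSpace 𝕜 A] [IsScalarTower 𝕜 A A]
    {a : A} (ha : IsSelfAdjoint a) (ha0 : a ≠ 0) {c : 𝕜} (h : a * a * a = c • a) :
    ‖a‖ ^ 2 = ‖c‖ := by
  have ha2 : IsSelfAdjoint (a * a) := by simpa [ha.star_eq] using IsSelfAdjoint.star_mul_self a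
  have h4 : (a * a) * (a * a) = c • (a * a) := by rw [← mul_assoc, h, smul_mul_assoc]
  have hsq : ‖a * a‖ * ‖a * a‖ = ‖c‖ * ‖a * a‖ := by
    rw [← sq, ← ha2.norm_mul_self, h4, norm_smul]
  have hne : ‖a * a‖ ≠ 0 := by
    rw [ha.norm_mul_self]
    exact pow_ne_zero 2 (norm_ne_zero_iff.mpr ha0)
  rw [← ha.norm_mul_self]
  exact mul_right_cancel₀ hne hsq

namespace InnerProductSpace

variable {𝕜 E : Type*} [RCLike 𝕜] [NormedAddCommGroup E] [InnerProductSpace 𝕜 E]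

theorem rankOne_self_mul_rankOne_self_mul_rankOne_self (x y : E) :
    rankOne 𝕜 x x * rankOne 𝕜 y y * rankOne 𝕜 x x =
      ((‖(inner 𝕜 x y : 𝕜)‖ ^ 2 : ℝ) : 𝕜) • rankOne 𝕜 x x := by
  simp only [ContinuousLinearMap.mul_def, rankOne_comp_rankOne, ContinuousLinearMap.smul_comp,
    smul_smul]
  rw [← inner_conj_symm y x, RCLike.mul_conj]
  push_cast
  rfl

theorem rankOne_self_sub_rankOne_self_cube {x y : E} (hx : ‖x‖ = 1) (hy : ‖y‖ = 1) :
    (rankOne 𝕜 x x - rankOne 𝕜 y y) * (rankOne 𝕜 x x - rankOne 𝕜 y y) *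
        (rankOne 𝕜 x x - rankOne 𝕜 y y) =
      ((1 - ‖(inner 𝕜 x y : 𝕜)‖ ^ 2 : ℝ) : 𝕜) • (rankOne 𝕜 x x - rankOne 𝕜 y y) := by
  rw [RCLike.ofReal_sub, RCLike.ofReal_one]
  exact (isIdempotentElem_rankOne_self hx).sub_mul_sub_mul_sub
    (isIdempotentElem_rankOne_self hy) (rankOne_self_mul_rankOne_self_mul_rankOne_self x y)
    (norm_inner_symm (𝕜 := 𝕜) y x ▸ rankOne_self_mul_rankOne_self_mul_rankOne_self y x)

theorem inner_rankOne_self_sub_rankOne_self_apply {x : E} (hx : ‖x‖ = 1) (y : E) :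
    inner 𝕜 x ((rankOne 𝕜 x x - rankOne 𝕜 y y) x) = ((1 - ‖(inner 𝕜 x y : 𝕜)‖ ^ 2 : ℝ) : 𝕜) := by
  rw [sub_apply, inner_sub_right, inner_right_rankOne_apply, inner_right_rankOne_apply,
    inner_self_eq_norm_sq_to_K, hx, ← inner_conj_symm y x, RCLike.mul_conj]
  push_cast
  ring

theorem isSelfAdjoint_rankOne_self [CompleteSpace E] (x : E) : IsSelfAdjoint (rankOne 𝕜 x x) :=
  ContinuousLinearMap.isSelfAdjoint_iff'.mpr (adjoint_rankOne x x)

end InnerProductSpace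

theorem stmt0 {H : Type*} [NormedAddCommGroup H] [InnerProductSpace ℂ H] [CompleteSpace H]
    (φ ψ : H) (hφ : ‖φ‖ = 1) (hψ : ‖ψ‖ = 1) :
    ‖rankOne φ - rankOne ψ‖ = Real.sqrt (1 - ‖(inner ℂ φ ψ : ℂ)‖ ^ 2) := by
  have hs : 0 ≤ 1 - ‖(inner ℂ φ ψ : ℂ)‖ ^ 2 := sub_nonneg.mpr <|
    pow_le_one₀ (norm_nonneg _) (by simpa [hφ, hψ] using norm_inner_le_norm (𝕜 := ℂ) φ ψ)
  change ‖InnerProductSpace.rankOne ℂ φ φ - InnerProductSpace.rankOne ℂ ψ ψ‖ = _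
  by_cases hT : InnerProductSpace.rankOne ℂ φ φ - InnerProductSpace.rankOne ℂ ψ ψ = 0
  · have hs0 := InnerProductSpace.inner_rankOne_self_sub_rankOne_self_apply (𝕜 := ℂ) hφ ψ
    rw [hT, zero_apply, inner_zero_right, eq_comm, RCLike.ofReal_eq_zero] at hs0
    rw [hT, hs0, norm_zero, Real.sqrt_zero]
  · have hsa := (InnerProductSpace.isSelfAdjoint_rankOne_self (𝕜 := ℂ) φ).sub
      (InnerProductSpace.isSelfAdjoint_rankOne_self ψ)
    rw [← Real.sqrt_sq (norm_nonneg _), hsa.norm_sq_eq_of_mul_mul_self_eq_smul hT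
      (InnerProductSpace.rankOne_self_sub_rankOne_self_cube hφ hψ), RCLike.norm_ofReal,
      abs_of_nonneg hs]
end

section
/- On the set of rank-one orthogonal projections of a separable complex Hilbert space, the coarsest topology making all transition-probability functions P ↦ tr(PQ) (for rank-one projections Q) continuous coincides with the topology induced by the operator norm. -/
/-!
Each `P ↦ tr(P Q)` with `Q = |φ⟩⟨φ|` equals `P ↦ ⟪φ, P φ⟫`, which is norm-continuous, so the
initial topology is coarser than the norm topology. Conversely, for unit vectors `ψ, φ` whose
phases are aligned, `‖|ψ⟩⟨ψ| - |φ⟩⟨φ|‖ ≤ 2 ‖ψ - φ‖` and `‖ψ - φ‖² = 2 - 2 |⟪φ, ψ⟫|`, so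
`‖P - Q‖² ≤ 8 (1 - tr(P Q))`: the initial-topology neighbourhoods `{P | tr(P Q) > 1 - ε² / 8}` of
`Q` lie in norm balls.
-/

open Topology Filter
open scoped InnerProductSpace

section RankOne

variable {H : Type*} [NormedAddCommGroup H] [InnerProductSpace ℂ H]

lemma rankOne_apply (φ x : H) : rankOne φ x = ⟪φ, x⟫_ℂ • φ := rfl

lemma rankOne_smul_of_norm_eq_one (ψ : H) {c : ℂ} (hc : ‖c‖ = 1) :
    rankOne (c • ψ) = rankOne ψ := by
  ext x
  have hcc : (starRingEnd ℂ) c * c = 1 := by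
    rw [mul_comm, Complex.mul_conj', hc]; norm_num
  simp only [rankOne_apply, inner_smul_left, smul_smul, mul_right_comm _ _ c, hcc, one_mul]

lemma norm_rankOne_sub_le {ψ φ : H} (hψ : ‖ψ‖ = 1) (hφ : ‖φ‖ = 1) :
    ‖rankOne ψ - rankOne φ‖ ≤ 2 * ‖ψ - φ‖ := by
  refine ContinuousLinearMap.opNorm_le_bound _ (by positivity) fun x => ?_
  have hsplit : (rankOne ψ - rankOne φ) x = ⟪ψ - φ, x⟫_ℂ • ψ + ⟪φ, x⟫_ℂ • (ψ - φ) := by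
    simp [rankOne_apply, sub_smul, smul_sub]
  calc ‖(rankOne ψ - rankOne φ) x‖
      ≤ ‖⟪ψ - φ, x⟫_ℂ • ψ‖ + ‖⟪φ, x⟫_ℂ • (ψ - φ)‖ := hsplit ▸ norm_add_le _ _
    _ ≤ ‖ψ - φ‖ * ‖x‖ * 1 + 1 * ‖x‖ * ‖ψ - φ‖ := by
        rw [norm_smul, norm_smul, hψ, ← hφ]
        gcongr <;> exact norm_inner_le_norm _ _
    _ = 2 * ‖ψ - φ‖ * ‖x‖ := by ring

lemma norm_rankOne_sub_sq_le {ψ φ : H} (hψ : ‖ψ‖ = 1) (hφ : ‖φ‖ = 1) :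
    ‖rankOne ψ - rankOne φ‖ ^ 2 ≤ 8 * (1 - ‖⟪φ, ψ⟫_ℂ‖ ^ 2) := by
  obtain ⟨c, hc, hphase⟩ : ∃ c : ℂ, ‖c‖ = 1 ∧ ⟪φ, c • ψ⟫_ℂ = ‖⟪φ, ψ⟫_ℂ‖ := by
    refine ⟨Complex.exp (-(Complex.arg ⟪φ, ψ⟫_ℂ) * Complex.I), by simp [Complex.norm_exp], ?_⟩
    rw [inner_smul_right]
    nth_rewrite 2 [← Complex.norm_mul_exp_arg_mul_I ⟪φ, ψ⟫_ℂ]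
    rw [mul_left_comm, ← Complex.exp_add, neg_mul, neg_add_cancel, Complex.exp_zero, mul_one]
  set t := ‖⟪φ, ψ⟫_ℂ‖
  have ht : t ≤ 1 := by simpa [hψ, hφ] using norm_inner_le_norm (𝕜 := ℂ) φ ψ
  have hcψ : ‖c • ψ‖ = 1 := by rw [norm_smul, hc, hψ, one_mul]
  have hdist : ‖c • ψ - φ‖ ^ 2 = 2 - 2 * t := by
    rw [@norm_sub_sq ℂ, hcψ, hφ, ← inner_conj_symm, hphase]
    simp only [Complex.conj_ofReal, Complex.ofReal_re, RCLike.re_to_complex]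
    ring
  calc ‖rankOne ψ - rankOne φ‖ ^ 2 = ‖rankOne (c • ψ) - rankOne φ‖ ^ 2 := by
        rw [rankOne_smul_of_norm_eq_one ψ hc]
    _ ≤ (2 * ‖c • ψ - φ‖) ^ 2 := by gcongr; exact norm_rankOne_sub_le hcψ hφ
    _ ≤ 8 * (1 - t ^ 2) := by nlinarith [norm_nonneg (⟪φ, ψ⟫_ℂ)]

variable {ι : Type*} (b : HilbertBasis ι ℂ H)

lemma traceAlong_mul_rankOne (A : H →L[ℂ] H) (φ : H) :
    traceAlong b (A * rankOne φ) = ⟪φ, A φ⟫_ℂ := by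
  have hterm : ∀ i, ⟪b i, (A * rankOne φ) (b i)⟫_ℂ = ⟪φ, b i⟫_ℂ * ⟪b i, A φ⟫_ℂ := fun i => by
    simp [rankOne_apply]
  simp only [traceAlong, hterm]
  exact b.tsum_inner_mul_inner φ (A φ)

lemma re_traceAlong_rankOne_mul_rankOne (ψ φ : H) :
    (traceAlong b (rankOne ψ * rankOne φ)).re = ‖⟪φ, ψ⟫_ℂ‖ ^ 2 := by
  rw [traceAlong_mul_rankOne, rankOne_apply, inner_smul_right, ← inner_conj_symm ψ φ, mul_comm,
    Complex.mul_conj']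
  norm_cast

end RankOne

section ProjSet

variable {H ι : Type*} [NormedAddCommGroup H] [InnerProductSpace ℂ H] (b : HilbertBasis ι ℂ H)

lemma continuous_re_traceAlong_mul_rankOne (φ : H) :
    Continuous fun A : H →L[ℂ] H => (traceAlong b (A * rankOne φ)).re := by
  simp only [traceAlong_mul_rankOne]
  fun_prop

lemma re_traceAlong_mul_self_of_mem_projSet {Q : H →L[ℂ] H} (hQ : Q ∈ projSet H) :
    (traceAlong b (Q * Q)).re = 1 := by
  obtain ⟨φ, hφ, rfl⟩ := hQ
  rw [re_traceAlong_rankOne_mul_rankOne, inner_self_eq_norm_sq_to_K, hφ]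
  norm_num

lemma norm_sub_sq_le_of_mem_projSet {P Q : H →L[ℂ] H} (hP : P ∈ projSet H)
    (hQ : Q ∈ projSet H) : ‖P - Q‖ ^ 2 ≤ 8 * (1 - (traceAlong b (P * Q)).re) := by
  obtain ⟨ψ, hψ, rfl⟩ := hP
  obtain ⟨φ, hφ, rfl⟩ := hQ
  rw [re_traceAlong_rankOne_mul_rankOne]
  exact norm_rankOne_sub_sq_le hψ hφ

end ProjSet

theorem stmt7_general {H ι : Type*} [NormedAddCommGroup H] [InnerProductSpace ℂ H]
    (b : HilbertBasis ι ℂ H) :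
    (⨅ Q : ↥(projSet H), TopologicalSpace.induced
        (fun P : ↥(projSet H) => (traceAlong b (P.1 * Q.1)).re) inferInstance) =
      (instTopologicalSpaceSubtype : TopologicalSpace ↥(projSet H)) := by
  refine le_antisymm ?_ (le_iInf fun Q => ?_)
  · set τ := ⨅ Q : ↥(projSet H), TopologicalSpace.induced
      (fun P : ↥(projSet H) => (traceAlong b (P.1 * Q.1)).re) inferInstance
    suffices Continuous[τ, _] (Subtype.val : ↥(projSet H) → (H →L[ℂ] H)) from
      continuous_iff_le_induced.mp this
    refine (@continuous_iff_continuousAt _ _ τ _ _).mpr fun Q => ?_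
    have hQ : Continuous[τ, _] fun P : ↥(projSet H) => (traceAlong b (P.1 * Q.1)).re :=
      continuous_iff_le_induced.mpr (iInf_le _ Q)
    have hbound : Tendsto (fun P : ↥(projSet H) => √(8 * (1 - (traceAlong b (P.1 * Q.1)).re)))
        (@nhds _ τ Q) (𝓝 0) := by
      simpa [re_traceAlong_mul_self_of_mem_projSet b Q.2] using
        (((@Continuous.tendsto _ _ τ _ _ hQ Q).const_sub 1).const_mul 8).sqrt
    rw [ContinuousAt, tendsto_iff_norm_sub_tendsto_zero]
    exact squeeze_zero (fun _ => norm_nonneg _)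
      (fun P => Real.le_sqrt_of_sq_le (norm_sub_sq_le_of_mem_projSet b P.2 Q.2)) hbound
  · obtain ⟨φ, -, hQ⟩ := Q.2
    rw [← continuous_iff_le_induced, hQ]
    exact (continuous_re_traceAlong_mul_rankOne b φ).comp continuous_subtype_val

theorem stmt7 {H ι : Type*} [NormedAddCommGroup H] [InnerProductSpace ℂ H] [CompleteSpace H]
    [Nontrivial H] [SecondCountableTopology H] (b : HilbertBasis ι ℂ H) :
    (⨅ Q : ↥(projSet H), TopologicalSpace.induced
        (fun P : ↥(projSet H) => (traceAlong b (P.1 * Q.1)).re) inferInstance) =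
      (instTopologicalSpaceSubtype : TopologicalSpace ↥(projSet H)) :=
  stmt7_general b
end

section
/- Let R be a reduction map on a measurable space (Ω,Σ) with the property that {R δ_ω : ω ∈ Ω} equals the set of rank-one projections. Then the map i : Ω → P(H), i(ω) = R δ_ω, is measurable, and for every probability measure μ on Ω and every bounded self-adjoint operator A, tr((Rμ)A) = ∫_{P(H)} tr(PA) d(μ ∘ i⁻¹)(P); i.e., R μ equals the Misra-Bugajski map applied to the image measure μ ∘ i⁻¹. -/
/-!
Evaluating the duality `tr((Rμ)A) = ∫ R'A dμ` at Dirac measures gives `tr(i(ω) A) = R'A(ω)`, so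
the formula is the change of variables `∫ R'A dμ = ∫ tr(pA) d(μ ∘ i⁻¹)(p)`; what has to be shown
is that `i` is measurable and that `p ↦ tr(pA)` is continuous on `P(H)`.

Both come from the identity `p A p = tr(pA) p` for rank-one projections `p`. It makes
`p ↦ tr(pA)` Lipschitz, and combined with the C*-identity it gives
`√(1 - tr(pq)) = ‖(p - q) p‖ ≤ ‖p - q‖ ≤ ‖p - pq‖ + ‖q - pq‖ = 2 √(1 - tr(pq))`.
Hence the distance from `i(ω)` to any fixed `q` is comparable to `√|1 - R'q(ω)|`, a measurable
function of `ω`, and since `P(H)` is separable every open set pulls back to a countable union of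
measurable sets.
-/

open MeasureTheory Topology Filter

/-- `W` is a density operator: positive, trace class, with trace one
(trace computed along the Hilbert basis `b`). -/
noncomputable def IsDensityOp {H ι : Type*} [NormedAddCommGroup H] [InnerProductSpace ℂ H]
    [CompleteSpace H] (b : HilbertBasis ι ℂ H) (W : H →L[ℂ] H) : Prop :=
  W.IsPositive ∧ HasSum (fun i => (inner ℂ (b i) (W (b i)) : ℂ)) 1

open scoped InnerProductSpace

theorem IsSelfAdjoint.star_sub_mul {R : Type*} [NonUnitalRing R] [StarRing R] {p q : R}
    (hp : IsSelfAdjoint p) (hq : IsSelfAdjoint q) : star (p - q * p) = p - p * q := by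
  rw [star_sub, star_mul, hp.star_eq, hq.star_eq]

section CStarRing

variable {E : Type*} [NonUnitalNormedRing E] [StarRing E] [CStarRing E] {p q : E}

theorem IsStarProjection.sq_norm_sub_mul (hp : IsStarProjection p) (hq : IsStarProjection q) :
    ‖p - q * p‖ ^ 2 = ‖p - p * q * p‖ := by
  have hprod : (p - p * q) * (p - q * p) = p - p * q * p := by
    have : (p - p * q) * (p - q * p) = p * p - p * q * p - p * q * p + p * (q * q) * p := by
      noncomm_ring
    rw [this, hp.isIdempotentElem.eq, hq.isIdempotentElem.eq]
    abel
  rw [sq, ← CStarRing.norm_star_mul_self, hp.isSelfAdjoint.star_sub_mul hq.isSelfAdjoint, hprod]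

theorem IsStarProjection.sqrt_norm_sub_mul_mul_le (hp : IsStarProjection p)
    (hq : IsStarProjection q) : √‖p - p * q * p‖ ≤ ‖p - q‖ :=
  calc √‖p - p * q * p‖ = ‖(p - q) * p‖ := by
        rw [← hp.sq_norm_sub_mul hq, Real.sqrt_sq (norm_nonneg _), sub_mul, hp.isIdempotentElem.eq]
    _ ≤ ‖p - q‖ * ‖p‖ := norm_mul_le _ _
    _ ≤ ‖p - q‖ := mul_le_of_le_one_right (norm_nonneg _) (hp.norm_le p)

theorem IsStarProjection.norm_sub_le (hp : IsStarProjection p) (hq : IsStarProjection q) :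
    ‖p - q‖ ≤ √‖p - p * q * p‖ + √‖q - q * p * q‖ :=
  calc ‖p - q‖ = ‖(p - p * q) - (q - p * q)‖ := by rw [sub_sub_sub_cancel_right]
    _ ≤ ‖p - p * q‖ + ‖q - p * q‖ := _root_.norm_sub_le _ _
    _ = √‖p - p * q * p‖ + √‖q - q * p * q‖ := by
        rw [← hp.sq_norm_sub_mul hq, ← hq.sq_norm_sub_mul hp, Real.sqrt_sq (norm_nonneg _),
          Real.sqrt_sq (norm_nonneg _), ← hp.isSelfAdjoint.star_sub_mul hq.isSelfAdjoint,
          norm_star]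

end CStarRing

theorem measurable_of_dist_comparable {α X : Type*} [MeasurableSpace α] [PseudoMetricSpace X]
    [TopologicalSpace.SeparableSpace X] [MeasurableSpace X] [BorelSpace X] {f : α → X}
    (g : X → α → ℝ) (hg : ∀ x, Measurable (g x)) {C : ℝ} (hC : 0 ≤ C)
    (hlow : ∀ x a, g x a ≤ dist (f a) x) (hup : ∀ x a, dist (f a) x ≤ C * g x a) :
    Measurable f := by
  refine measurable_of_isOpen fun U hU => ?_
  obtain ⟨D, hDc, hDd⟩ := TopologicalSpace.exists_countable_dense X
  set T := {xr : X × ℚ | xr.1 ∈ D ∧ 0 < xr.2 ∧ Metric.closedBall xr.1 (C * xr.2) ⊆ U}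
  have hT : T.Countable :=
    (hDc.prod Set.countable_univ).mono fun xr hxr => Set.mem_prod.mpr ⟨hxr.1, Set.mem_univ _⟩
  have hpre : f ⁻¹' U = ⋃ xr ∈ T, {a | g xr.1 a < xr.2} := by
    ext a
    simp only [Set.mem_preimage, Set.mem_iUnion, Set.mem_ofPred_eq, exists_prop]
    constructor
    · intro ha
      obtain ⟨ε, hε, hball⟩ := Metric.isOpen_iff.mp hU (f a) ha
      obtain ⟨r, hr0, hrε⟩ := exists_rat_btwn (div_pos hε (by linarith : 0 < C + 1))
      obtain ⟨x, hxD, hx⟩ := hDd.exists_dist_lt (f a) hr0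
      refine ⟨(x, r), ⟨hxD, by exact_mod_cast hr0, fun y hy => hball ?_⟩,
        (hlow x a).trans_lt hx⟩
      have hy : dist y x ≤ C * r := hy
      rw [Metric.mem_ball]
      calc dist y (f a) ≤ dist y x + dist (f a) x := dist_triangle_right _ _ _
        _ < (C + 1) * r := by linarith
        _ < ε := (lt_div_iff₀' (by linarith)).mp hrε
    · rintro ⟨⟨x, r⟩, ⟨-, -, hball⟩, ha⟩
      exact hball ((hup x a).trans (mul_le_mul_of_nonneg_left ha.le hC))
  rw [hpre]
  exact MeasurableSet.biUnion hT fun xr _ => measurableSet_lt (hg _) measurable_const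

section RankOne

variable {H ι : Type*} [NormedAddCommGroup H] [InnerProductSpace ℂ H]

theorem rankOne_eq_innerProductSpace_rankOne (φ : H) :
    rankOne φ = InnerProductSpace.rankOne ℂ φ φ := rfl

theorem norm_of_mem_projSet {p : H →L[ℂ] H} (hp : p ∈ projSet H) : ‖p‖ = 1 := by
  obtain ⟨φ, hφ, rfl⟩ := hp
  simp [rankOne_eq_innerProductSpace_rankOne, hφ]

theorem rankOne_mul_mul_rankOne (φ : H) (A : H →L[ℂ] H) :
    rankOne φ * A * rankOne φ = ⟪φ, A φ⟫_ℂ • rankOne φ := by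
  simp [rankOne_eq_innerProductSpace_rankOne, ContinuousLinearMap.mul_def,
    InnerProductSpace.comp_rankOne]

theorem continuous_rankOne : Continuous (rankOne : H → H →L[ℂ] H) := by
  unfold rankOne
  fun_prop

instance separableSpace_projSet [TopologicalSpace.SeparableSpace H] :
    TopologicalSpace.SeparableSpace (projSet H) := by
  have hsub : projSet H ⊆ Set.range (rankOne : H → H →L[ℂ] H) := by
    rintro p ⟨φ, -, rfl⟩
    exact ⟨φ, rfl⟩
  exact ((TopologicalSpace.isSeparable_range continuous_rankOne).mono hsub).separableSpace

variable [CompleteSpace H] (b : HilbertBasis ι ℂ H)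

theorem isStarProjection_of_mem_projSet {p : H →L[ℂ] H} (hp : p ∈ projSet H) :
    IsStarProjection p := by
  obtain ⟨φ, hφ, rfl⟩ := hp
  exact InnerProductSpace.isStarProjection_rankOne_self hφ

theorem traceAlong_rankOne_mul (φ : H) (A : H →L[ℂ] H) :
    traceAlong b (rankOne φ * A) = ⟪φ, A φ⟫_ℂ := by
  rw [← ContinuousLinearMap.adjoint_inner_left, ← b.tsum_inner_mul_inner]
  refine tsum_congr fun i => ?_
  rw [mul_apply_eq_comp, rankOne_eq_innerProductSpace_rankOne, InnerProductSpace.rankOne_apply,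
    inner_smul_right, ContinuousLinearMap.adjoint_inner_left, mul_comm]

theorem mul_mul_self_of_mem_projSet {p : H →L[ℂ] H} (hp : p ∈ projSet H) (A : H →L[ℂ] H) :
    p * A * p = traceAlong b (p * A) • p := by
  obtain ⟨φ, -, rfl⟩ := hp
  rw [rankOne_mul_mul_rankOne, traceAlong_rankOne_mul]

theorem traceAlong_mul_comm_of_mem_projSet {p q : H →L[ℂ] H} (hp : p ∈ projSet H)
    (hq : q ∈ projSet H) : traceAlong b (p * q) = traceAlong b (q * p) := by
  obtain ⟨φ, -, rfl⟩ := hp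
  obtain ⟨ψ, -, rfl⟩ := hq
  rw [traceAlong_rankOne_mul, traceAlong_rankOne_mul]
  simp only [rankOne_eq_innerProductSpace_rankOne, InnerProductSpace.inner_right_rankOne_apply,
    mul_comm]

theorem norm_sub_mul_mul_self_of_mem_projSet {p : H →L[ℂ] H} (hp : p ∈ projSet H)
    (A : H →L[ℂ] H) : ‖p - p * A * p‖ = ‖1 - traceAlong b (p * A)‖ := by
  nth_rewrite 1 [mul_mul_self_of_mem_projSet b hp, ← one_smul ℂ p]
  rw [← sub_smul, norm_smul, norm_of_mem_projSet hp, mul_one]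

theorem norm_traceAlong_mul_le_of_mem_projSet {p : H →L[ℂ] H} (hp : p ∈ projSet H)
    (A : H →L[ℂ] H) : ‖traceAlong b (p * A)‖ ≤ ‖A‖ :=
  calc ‖traceAlong b (p * A)‖ = ‖p * A * p‖ := by
        rw [mul_mul_self_of_mem_projSet b hp, norm_smul, norm_of_mem_projSet hp, mul_one]
    _ ≤ ‖p‖ * ‖A‖ * ‖p‖ := norm_mul₃_le
    _ = ‖A‖ := by rw [norm_of_mem_projSet hp, one_mul, mul_one]


theorem sqrt_norm_one_sub_traceAlong_mul_le_dist (p q : projSet H) :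
    √‖1 - traceAlong b (p * q)‖ ≤ dist p q := by
  rw [← norm_sub_mul_mul_self_of_mem_projSet b p.2, Subtype.dist_eq, dist_eq_norm]
  exact (isStarProjection_of_mem_projSet p.2).sqrt_norm_sub_mul_mul_le
    (isStarProjection_of_mem_projSet q.2)

theorem dist_le_two_mul_sqrt_norm_one_sub_traceAlong_mul (p q : projSet H) :
    dist p q ≤ 2 * √‖1 - traceAlong b (p * q)‖ := by
  have hp := isStarProjection_of_mem_projSet p.2
  have hq := isStarProjection_of_mem_projSet q.2
  calc dist p q ≤ √‖(p : H →L[ℂ] H) - p * q * p‖ + √‖(q : H →L[ℂ] H) - q * p * q‖ := by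
        rw [Subtype.dist_eq, dist_eq_norm]
        exact hp.norm_sub_le hq
    _ = 2 * √‖1 - traceAlong b (p * q)‖ := by
        rw [norm_sub_mul_mul_self_of_mem_projSet b p.2, norm_sub_mul_mul_self_of_mem_projSet b q.2,
          traceAlong_mul_comm_of_mem_projSet b q.2 p.2, two_mul]

theorem lipschitzWith_traceAlong_mul (A : H →L[ℂ] H) :
    LipschitzWith (3 * ‖A‖₊) fun p : projSet H => traceAlong b (p * A) := by
  refine LipschitzWith.of_dist_le_mul ?_
  rintro ⟨p, hp⟩ ⟨q, hq⟩
  set tp := traceAlong b (p * A)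
  set tq := traceAlong b (q * A)
  rw [dist_eq_norm, Subtype.dist_eq, dist_eq_norm]
  calc ‖tp - tq‖ = ‖(tp - tq) • p‖ := by rw [norm_smul, norm_of_mem_projSet hp, mul_one]
    _ = ‖(p - q) * A * p + q * A * (p - q) + tq • (q - p)‖ := by
        rw [sub_smul, ← mul_mul_self_of_mem_projSet b hp, smul_sub,
          ← mul_mul_self_of_mem_projSet b hq]
        noncomm_ring
    _ ≤ ‖p - q‖ * ‖A‖ * ‖p‖ + ‖q‖ * ‖A‖ * ‖p - q‖ + ‖tq‖ * ‖q - p‖ := by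
        refine (norm_add₃_le).trans (add_le_add_three norm_mul₃_le norm_mul₃_le ?_)
        rw [norm_smul]
    _ ≤ 3 * ‖A‖ * ‖p - q‖ := by
        rw [norm_of_mem_projSet hp, norm_of_mem_projSet hq, norm_sub_rev q p]
        nlinarith [norm_traceAlong_mul_le_of_mem_projSet b hq A, norm_nonneg (p - q)]

end RankOne

theorem stmt19_general {H ι Ω : Type*} [NormedAddCommGroup H] [InnerProductSpace ℂ H] [CompleteSpace H]
    [SecondCountableTopology H] [MeasurableSpace Ω]
    [MeasurableSpace ↥(projSet H)] [BorelSpace ↥(projSet H)] (b : HilbertBasis ι ℂ H)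
    (R : SignedMeasure Ω →ₗ[ℝ] (H →L[ℂ] H))
    (R' : (H →L[ℂ] H) → Ω → ℝ)
    (hmeas : ∀ A : H →L[ℂ] H, IsSelfAdjoint A → Measurable (R' A))
    (hdual : ∀ (μ : Measure Ω) [IsProbabilityMeasure μ], ∀ A : H →L[ℂ] H, IsSelfAdjoint A →
        traceAlong b (R μ.toSignedMeasure * A) = ((∫ ω, R' A ω ∂μ : ℝ) : ℂ))
    (hi : ∀ ω : Ω, R (Measure.dirac ω).toSignedMeasure ∈ projSet H) :
    Measurable (fun ω : Ω => (⟨R (Measure.dirac ω).toSignedMeasure, hi ω⟩ : ↥(projSet H))) ∧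
    ∀ (μ : Measure Ω) [IsProbabilityMeasure μ], ∀ A : H →L[ℂ] H, IsSelfAdjoint A →
      traceAlong b (R μ.toSignedMeasure * A) =
        ∫ p, traceAlong b ((p : H →L[ℂ] H) * A)
          ∂(μ.map (fun ω : Ω => (⟨R (Measure.dirac ω).toSignedMeasure, hi ω⟩ : ↥(projSet H)))) := by
  set i : Ω → projSet H := fun ω => ⟨R (Measure.dirac ω).toSignedMeasure, hi ω⟩
  have traceAlong_dirac (ω : Ω) {A : H →L[ℂ] H} (hA : IsSelfAdjoint A) :
      traceAlong b ((i ω : H →L[ℂ] H) * A) = R' A ω := by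
    simpa [integral_dirac' _ _ (hmeas A hA).stronglyMeasurable] using
      hdual (Measure.dirac ω) A hA
  have hsa (q : projSet H) : IsSelfAdjoint (q : H →L[ℂ] H) :=
    (isStarProjection_of_mem_projSet q.2).isSelfAdjoint
  have hi_meas : Measurable i := by
    refine measurable_of_dist_comparable (fun q ω => √‖1 - (R' q ω : ℂ)‖)
      (fun q => by have := hmeas q (hsa q); fun_prop) zero_le_two (fun q ω => ?_) (fun q ω => ?_)
    · simpa only [traceAlong_dirac ω (hsa q)] using
        sqrt_norm_one_sub_traceAlong_mul_le_dist b (i ω) q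
    · simpa only [traceAlong_dirac ω (hsa q)] using
        dist_le_two_mul_sqrt_norm_one_sub_traceAlong_mul b (i ω) q
  refine ⟨hi_meas, fun μ _ A hA => ?_⟩
  calc traceAlong b (R μ.toSignedMeasure * A) = ∫ ω, (R' A ω : ℂ) ∂μ :=
        (hdual μ A hA).trans integral_ofReal.symm
    _ = ∫ ω, traceAlong b ((i ω : H →L[ℂ] H) * A) ∂μ := by
        simp only [traceAlong_dirac _ hA]
    _ = ∫ p, traceAlong b ((p : H →L[ℂ] H) * A) ∂(μ.map i) :=
        (integral_map_of_stronglyMeasurable hi_meas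
          (lipschitzWith_traceAlong_mul b A).continuous.stronglyMeasurable).symm

theorem stmt19 {H ι Ω : Type*} [NormedAddCommGroup H] [InnerProductSpace ℂ H] [CompleteSpace H]
    [Nontrivial H] [SecondCountableTopology H] [MeasurableSpace Ω]
    [MeasurableSpace ↥(projSet H)] [BorelSpace ↥(projSet H)] (b : HilbertBasis ι ℂ H)
    (R : SignedMeasure Ω →ₗ[ℝ] (H →L[ℂ] H))
    (R' : (H →L[ℂ] H) → Ω → ℝ)
    (hmeas : ∀ A : H →L[ℂ] H, IsSelfAdjoint A → Measurable (R' A))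
    (hbdd : ∀ A : H →L[ℂ] H, IsSelfAdjoint A → ∃ C : ℝ, ∀ ω, |R' A ω| ≤ C)
    (hdual : ∀ (μ : Measure Ω) [IsProbabilityMeasure μ], ∀ A : H →L[ℂ] H, IsSelfAdjoint A →
        traceAlong b (R μ.toSignedMeasure * A) = ((∫ ω, R' A ω ∂μ : ℝ) : ℂ))
    (hstates : ∀ (μ : Measure Ω) [IsProbabilityMeasure μ], IsDensityOp b (R μ.toSignedMeasure))
    (hsurj : ∀ W : H →L[ℂ] H, IsDensityOp b W →
        ∃ (μ : Measure Ω) (hμ : IsProbabilityMeasure μ),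
          R (letI := hμ; μ.toSignedMeasure) = W)
    (hi : ∀ ω : Ω, R (Measure.dirac ω).toSignedMeasure ∈ projSet H)
    (hionto : ∀ p : ↥(projSet H), ∃ ω : Ω, R (Measure.dirac ω).toSignedMeasure = (p : H →L[ℂ] H)) :
    Measurable (fun ω : Ω => (⟨R (Measure.dirac ω).toSignedMeasure, hi ω⟩ : ↥(projSet H))) ∧
    ∀ (μ : Measure Ω) [IsProbabilityMeasure μ], ∀ A : H →L[ℂ] H, IsSelfAdjoint A →
      traceAlong b (R μ.toSignedMeasure * A) =
        ∫ p, traceAlong b ((p : H →L[ℂ] H) * A)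
          ∂(μ.map (fun ω : Ω => (⟨R (Measure.dirac ω).toSignedMeasure, hi ω⟩ : ↥(projSet H)))) :=
  stmt19_general b R R' hmeas hdual hi
end
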